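/- In type Bₙ (n ≥ 3), let ω₁^∨ be the first fundamental coweight and let μ be a dominant coweight in the coroot lattice translate of ω₁^∨ (i.e. μ - ω₁^∨ lies in the coroot lattice) with ω₁^∨ ≤ μ. Then μ is NOT ≥ ω₁^∨ + ω₂^∨ in the dominance order if and only if μ ≤ ω_{ñ}^∨, where ñ is the largest odd integer with ñ ≤ n. -/

import Mathlib

/-- The simple coroots of type `Bₙ` in `ℤⁿ`: `αᵢ^∨ = eᵢ - eᵢ₊₁` for `i < n` and
`αₙ^∨ = 2eₙ` (indices `i : Fin n` are 0-based). -/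
def Bcoroot (n : ℕ) (i : Fin n) : Fin n → ℤ :=
  fun j => if i.val = n - 1 then (if j = i then 2 else 0)
    else if j.val = i.val then 1 else if j.val = i.val + 1 then -1 else 0

/-- The fundamental coweight `ωₘ^∨ = e₁ + ⋯ + eₘ` of type `Bₙ`. -/
def Bomega (n m : ℕ) : Fin n → ℤ := fun j => if j.val < m then 1 else 0

/-- Dominance order: `μ - λ` is a nonnegative integer combination of simple coroots. -/
def BdomLE (n : ℕ) (lam mu : Fin n → ℤ) : Prop :=
  ∃ c : Fin n → ℕ, mu - lam = ∑ i, (c i : ℤ) • Bcoroot n i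

/-- Dominant coweights of type `Bₙ`: weakly decreasing with nonnegative entries. -/
def Bdominant (n : ℕ) (mu : Fin n → ℤ) : Prop :=
  Antitone mu ∧ ∀ j, 0 ≤ mu j

/-! For `v : ℤⁿ` write `P_k(v) = v₁ + ⋯ + v_k`. Since `P_k(αₖ^∨)` is `1` for `k < n`, `2` for
`k = n`, and `P_k(αⱼ^∨) = 0` for `j ≠ k`, a vector `v` is a nonnegative integer combination of the
simple coroots iff every `P_k(v) ≥ 0` and `P_n(v)` is even; the coefficients are then read off the
partial sums. For a dominant `μ ∈ ω₁^∨ + Q^∨`, i.e. dominant with odd coordinate sum, both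
sides of the equivalence become conditions on the first coordinate: `μ ≥ ω₁^∨ + ω₂^∨` iff
`μ₁ ≥ 2` (if `μ₂ = 0` then `μ₁` is the odd sum, so `μ₁ ≥ 3`), and `μ ≤ ω_ñ^∨` iff `μ₁ ≤ 1`
(then all coordinates are `0` or `1`, and their odd sum is at most `ñ`). -/

open Finset

section

variable {n : ℕ}

def partialSum (n k : ℕ) : (Fin n → ℤ) →ₗ[ℤ] ℤ where
  toFun v := ∑ j with j.val < k, v j
  map_add' v w := sum_add_distrib
  map_smul' a v := by simp [mul_sum]

theorem partialSum_apply (k : ℕ) (v : Fin n → ℤ) :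
    partialSum n k v = ∑ j with j.val < k, v j := rfl

theorem partialSum_zero_apply (v : Fin n → ℤ) : partialSum n 0 v = 0 := by
  simp [partialSum_apply]

theorem partialSum_succ (v : Fin n → ℤ) (i : Fin n) :
    partialSum n (i + 1) v = partialSum n i v + v i := by
  calc partialSum n (i + 1) v
        = ∑ j ∈ insert i (univ.filter fun j : Fin n => j.val < i.val), v j := by
        rw [partialSum_apply]
        congr 1
        ext j
        simp only [mem_filter, mem_univ, true_and, mem_insert, Fin.ext_iff]
        omega
    _ = _ := by rw [sum_insert (by simp), add_comm]; rfl

theorem partialSum_self (v : Fin n → ℤ) : partialSum n n v = ∑ j, v j := by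
  simp [partialSum_apply]

theorem partialSum_single (j : Fin n) (a : ℤ) (k : ℕ) :
    partialSum n k (Pi.single j a) = if j.val < k then a else 0 := by
  simp [partialSum_apply, Pi.single_apply, sum_ite_eq']

theorem partialSum_Bomega (m k : ℕ) : partialSum n k (Bomega n m) = min n (min k m) := by
  simp only [partialSum_apply, Bomega, sum_ite, sum_const_zero, add_zero, sum_const,
    filter_filter]
  simp_rw [← lt_min_iff]
  rw [Fin.card_filter_val_lt]
  simp

theorem Bcoroot_of_val_eq (i : Fin n) (h : i.val = n - 1) : Bcoroot n i = Pi.single i 2 := by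
  funext j; simp [Bcoroot, h, Pi.single_apply]

theorem Bcoroot_of_val_lt (i : Fin n) (h : i.val + 1 < n) :
    Bcoroot n i = Pi.single i 1 - Pi.single ⟨i + 1, h⟩ 1 := by
  funext j
  simp only [Bcoroot, Pi.sub_apply, Pi.single_apply, Fin.ext_iff]
  split_ifs <;> omega

theorem partialSum_Bcoroot (i j : Fin n) :
    partialSum n (i + 1) (Bcoroot n j) =
      if i = j then (if j.val = n - 1 then 2 else 1) else 0 := by
  rcases (show j.val = n - 1 ∨ j.val + 1 < n by omega) with h | h
  · rw [Bcoroot_of_val_eq j h, partialSum_single]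
    simp only [Fin.ext_iff, h]
    split_ifs <;> omega
  · rw [Bcoroot_of_val_lt j h, map_sub, partialSum_single, partialSum_single]
    simp only [Fin.ext_iff]
    split_ifs <;> omega

theorem sum_Bomega (m : ℕ) : ∑ j, Bomega n m j = min n m := by
  rw [← partialSum_self, partialSum_Bomega]
  simp

theorem partialSum_sum_smul_Bcoroot (c : Fin n → ℤ) (i : Fin n) :
    partialSum n (i + 1) (∑ j, c j • Bcoroot n j) = (if i.val = n - 1 then 2 else 1) * c i := by
  simp only [map_sum, map_smul, partialSum_Bcoroot, smul_eq_mul, mul_ite, mul_zero,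
    sum_ite_eq, mem_univ, if_true]
  split_ifs <;> ring

theorem even_sum_sum_smul_Bcoroot (c : Fin n → ℤ) :
    Even (∑ j, (∑ i, c i • Bcoroot n i) j) := by
  cases n with
  | zero => simp
  | succ m =>
    have := partialSum_sum_smul_Bcoroot c (Fin.last m)
    simp only [Fin.val_last, add_tsub_cancel_right, if_true, partialSum_self] at this
    exact ⟨c (Fin.last m), by rw [this]; ring⟩

theorem eq_of_partialSum_succ_eq {v w : Fin n → ℤ}
    (h : ∀ i : Fin n, partialSum n (i + 1) v = partialSum n (i + 1) w) : v = w := by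
  funext j
  have hprev : partialSum n j v = partialSum n j w := by
    rcases Nat.eq_zero_or_pos j with h0 | hpos
    · simp [h0, partialSum_zero_apply]
    · simpa [Nat.sub_add_cancel hpos] using h ⟨j - 1, by omega⟩
  have := h j
  rw [partialSum_succ, partialSum_succ, hprev] at this
  linarith

theorem exists_nat_smul_Bcoroot_iff (v : Fin n → ℤ) :
    (∃ c : Fin n → ℕ, v = ∑ i, (c i : ℤ) • Bcoroot n i) ↔
      (∀ i : Fin n, 0 ≤ partialSum n (i + 1) v) ∧ Even (∑ j, v j) := by
  constructor
  · rintro ⟨c, rfl⟩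
    refine ⟨fun i => ?_, even_sum_sum_smul_Bcoroot _⟩
    rw [partialSum_sum_smul_Bcoroot]
    positivity
  · rintro ⟨hpos, heven⟩
    refine ⟨fun i => if i.val = n - 1 then (partialSum n (i + 1) v / 2).toNat
      else (partialSum n (i + 1) v).toNat, eq_of_partialSum_succ_eq fun i => ?_⟩
    rw [partialSum_sum_smul_Bcoroot]
    dsimp only
    have := hpos i
    split_ifs with hi
    · have htop : partialSum n (i + 1) v = ∑ j, v j := by
        rw [hi, Nat.sub_add_cancel (by omega), partialSum_self]
      obtain ⟨t, ht⟩ := heven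
      omega
    · omega

theorem BdomLE_iff (lam mu : Fin n → ℤ) : BdomLE n lam mu ↔
    (∀ i : Fin n, partialSum n (i + 1) lam ≤ partialSum n (i + 1) mu) ∧
      Even (∑ j, mu j - ∑ j, lam j) := by
  simp only [BdomLE, exists_nat_smul_Bcoroot_iff, map_sub, sub_nonneg, Pi.sub_apply,
    sum_sub_distrib]

theorem partialSum_one [NeZero n] (v : Fin n → ℤ) : partialSum n 1 v = v 0 := by
  simpa [partialSum_zero_apply] using partialSum_succ v 0

theorem partialSum_two [NeZero n] (h : 1 < n) (v : Fin n → ℤ) :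
    partialSum n 2 v = v 0 + v ⟨1, h⟩ := by
  rw [← partialSum_one v]
  exact partialSum_succ v ⟨1, h⟩

theorem partialSum_mono {v : Fin n → ℤ} (hv : ∀ j, 0 ≤ v j) {k l : ℕ} (hkl : k ≤ l) :
    partialSum n k v ≤ partialSum n l v := by
  rw [partialSum_apply, partialSum_apply]
  refine sum_le_sum_of_subset_of_nonneg (fun j => ?_) fun j _ _ => hv j
  simp only [mem_filter, mem_univ, true_and]
  omega

theorem partialSum_le_sum {v : Fin n → ℤ} (hv : ∀ j, 0 ≤ v j) (k : ℕ) :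
    partialSum n k v ≤ ∑ j, v j := by
  rw [partialSum_apply]
  exact sum_le_sum_of_subset_of_nonneg (subset_univ _) fun j _ _ => hv j

theorem partialSum_le_min {v : Fin n → ℤ} (hv : ∀ j, v j ≤ 1) (k : ℕ) :
    partialSum n k v ≤ min n k := by
  calc partialSum n k v ≤ #{j : Fin n | j.val < k} • (1 : ℤ) :=
        sum_le_card_nsmul _ _ _ fun j _ => hv j
    _ = min n k := by simp [Fin.card_filter_val_lt]

variable [NeZero n] {mu : Fin n → ℤ}

theorem three_le_partialSum (hdom : Bdominant n mu) (hodd : Odd (∑ j, mu j)) (h0 : 2 ≤ mu 0)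
    {k : ℕ} (hk : 2 ≤ k) (hkn : k ≤ n) :
    3 ≤ partialSum n k mu := by
  obtain ⟨hanti, hpos⟩ := hdom
  have h1n : 1 < n := by omega
  by_cases h1 : mu ⟨1, h1n⟩ = 0
  · have htail : ∑ j, mu j = mu 0 := Fintype.sum_eq_single _ fun j hj =>
      le_antisymm (h1 ▸ hanti (Fin.mk_le_of_le_val (Nat.one_le_iff_ne_zero.mpr
        (Fin.val_ne_zero_iff.mpr hj)))) (hpos j)
    obtain ⟨t, ht⟩ := hodd
    calc (3 : ℤ) ≤ partialSum n 1 mu := by rw [partialSum_one]; omega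
      _ ≤ partialSum n k mu := partialSum_mono hpos (by omega)
  · calc (3 : ℤ) ≤ partialSum n 2 mu := by
          rw [partialSum_two h1n]; have := hpos ⟨1, h1n⟩; omega
      _ ≤ partialSum n k mu := partialSum_mono hpos hk

theorem BdomLE_Bomega_one_add_Bomega_two_iff (hdom : Bdominant n mu)
    (hodd : Odd (∑ j, mu j)) (hn : 2 ≤ n) :
    BdomLE n (Bomega n 1 + Bomega n 2) mu ↔ 2 ≤ mu 0 := by
  have hsum : ∑ j, (Bomega n 1 + Bomega n 2) j = 3 := by
    simp only [Pi.add_apply, sum_add_distrib, sum_Bomega]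
    omega
  rw [BdomLE_iff, hsum]
  simp only [map_add, partialSum_Bomega]
  constructor
  · rintro ⟨h, -⟩
    have := h 0
    simp only [Fin.val_zero, zero_add, partialSum_one] at this
    omega
  · intro h0
    refine ⟨fun i => ?_, hodd.sub_odd (by decide)⟩
    rcases Nat.eq_zero_or_pos i.val with hi | hi
    · simp only [hi, zero_add, partialSum_one]
      omega
    · have := three_le_partialSum hdom hodd h0 (k := i + 1) (by omega) (by omega)
      omega

theorem BdomLE_Bomega_iff (hdom : Bdominant n mu) (hodd : Odd (∑ j, mu j)) {N : ℕ}
    (hN : N ≤ n) (hNodd : Odd N) (hnN : n ≤ N + 1) :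
    BdomLE n mu (Bomega n N) ↔ mu 0 ≤ 1 := by
  obtain ⟨hanti, hpos⟩ := hdom
  rw [BdomLE_iff, sum_Bomega, min_eq_right hN]
  simp only [partialSum_Bomega]
  constructor
  · rintro ⟨h, -⟩
    have := h 0
    simp only [Fin.val_zero, zero_add, partialSum_one] at this
    omega
  · intro h0
    have hle1 : ∀ j, mu j ≤ 1 := fun j => (hanti (Fin.zero_le j)).trans h0
    have hsumN : ∑ j, mu j ≤ N := by
      have := partialSum_le_min hle1 n
      rw [partialSum_self] at this
      obtain ⟨t, ht⟩ := hodd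
      obtain ⟨s, hs⟩ := hNodd
      omega
    refine ⟨fun i => ?_, hNodd.natCast.sub_odd hodd⟩
    have := partialSum_le_min hle1 (i + 1)
    have := partialSum_le_sum hpos (i + 1)
    omega

end

theorem stmt6_general (n : ℕ) (hn : 3 ≤ n) (mu : Fin n → ℤ)
    (hdom : Bdominant n mu)
    (hlat : ∃ c : Fin n → ℤ, mu - Bomega n 1 = ∑ i, c i • Bcoroot n i) :
    (¬ BdomLE n (Bomega n 1 + Bomega n 2) mu) ↔
      BdomLE n mu (Bomega n (if n % 2 = 1 then n else n - 1)) := by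
  have : NeZero n := ⟨by omega⟩
  have hodd : Odd (∑ j, mu j) := by
    obtain ⟨c, hc⟩ := hlat
    obtain ⟨t, ht⟩ := even_sum_sum_smul_Bcoroot c
    simp only [← hc, Pi.sub_apply, sum_sub_distrib, sum_Bomega] at ht
    exact ⟨t, by omega⟩
  rw [BdomLE_Bomega_one_add_Bomega_two_iff hdom hodd (by omega),
    BdomLE_Bomega_iff hdom hodd (by split <;> omega) (by split <;> simp [Nat.odd_iff] <;> omega)
      (by split <;> omega)]
  omega

/-- in type `Bₙ` (`n ≥ 3`), for a dominant coweight `μ` with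
`μ - ω₁^∨` in the coroot lattice and `ω₁^∨ ≤ μ`, one has `μ ≱ ω₁^∨ + ω₂^∨` iff
`μ ≤ ω_ñ^∨`, where `ñ` is the largest odd integer `≤ n`. -/
theorem stmt6 (n : ℕ) (hn : 3 ≤ n) (mu : Fin n → ℤ)
    (hdom : Bdominant n mu)
    (hlat : ∃ c : Fin n → ℤ, mu - Bomega n 1 = ∑ i, c i • Bcoroot n i)
    (hge : BdomLE n (Bomega n 1) mu) :
    (¬ BdomLE n (Bomega n 1 + Bomega n 2) mu) ↔
      BdomLE n mu (Bomega n (if n % 2 = 1 then n else n - 1)) :=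
  stmt6_general n hn mu hdom hlat
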